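/- Let n be a natural number. If X and Y are homotopy equivalent topological spaces, then for every ordinal κ the subspaces w_n^κ(X) and w_n^κ(Y) (with their subspace topologies) are homotopy equivalent. -/

import Mathlib

open Set Filter Topology

noncomputable section

/-- The unit `n`-sphere in `ℝ^{n+1}`. -/
def Sph (n : ℕ) : Set (EuclideanSpace ℝ (Fin (n + 1))) := Metric.sphere 0 1

/-- The basepoint `s₀ = (1,0,…,0)` of the `n`-sphere. -/
def sphBase (n : ℕ) : Sph n :=
  ⟨EuclideanSpace.single 0 1, by
    simp [Sph, mem_sphere_iff_norm, EuclideanSpace.norm_single]⟩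

/-- A map `S^n → X` is essential if it is not (freely) homotopic to any constant map. -/
def Essential {n : ℕ} {X : Type*} [TopologicalSpace X] (f : C(Sph n, X)) : Prop :=
  ∀ x : X, ¬ f.Homotopic (ContinuousMap.const _ x)

/-- A sequence of maps `S^n → X` converges to `x ∈ X` if every neighborhood of `x`
eventually contains all of their images. -/
def ConvergesTo {n : ℕ} {X : Type*} [TopologicalSpace X] (f : ℕ → C(Sph n, X)) (x : X) : Prop :=
  ∀ U ∈ 𝓝 x, ∀ᶠ k in atTop, ∀ s, f k s ∈ U

/-- `x` is a `π_n`-wild point of `X`. -/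
def IsWildPoint (n : ℕ) {X : Type*} [TopologicalSpace X] (x : X) : Prop :=
  ∃ f : ℕ → C(Sph n, X), (∀ k, Essential (f k)) ∧ (∀ k, f k (sphBase n) = x) ∧ ConvergesTo f x

/-- `x` is a free `π_n`-wild point of `X`. -/
def IsFreeWildPoint (n : ℕ) {X : Type*} [TopologicalSpace X] (x : X) : Prop :=
  ∃ f : ℕ → C(Sph n, X), (∀ k, Essential (f k)) ∧ ConvergesTo f x

/-- The `π_n`-wild set of a space `X`. -/
def wildSet (n : ℕ) (X : Type*) [TopologicalSpace X] : Set X := {x | IsWildPoint n x}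

/-- The free `π_n`-wild set of a space `X`. -/
def freeWildSet (n : ℕ) (X : Type*) [TopologicalSpace X] : Set X := {x | IsFreeWildPoint n x}

/-- The `π_n`-wild set of a subset `S ⊆ X`, computed in the subspace topology,
regarded again as a subset of `X`. -/
def wildSub (n : ℕ) {X : Type*} [TopologicalSpace X] (S : Set X) : Set X :=
  Subtype.val '' wildSet n ↥S

def freeWildSub (n : ℕ) {X : Type*} [TopologicalSpace X] (S : Set X) : Set X :=
  Subtype.val '' freeWildSet n ↥S

/-- The transfinitely iterated `π_n`-wild sets of `X`. -/
def iterWild (n : ℕ) (X : Type*) [TopologicalSpace X] (κ : Ordinal) : Set X :=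
  Ordinal.limitRecOn (motive := fun _ => Set X) κ Set.univ (fun _ ih => wildSub n ih)
    (fun κ _ ih => ⋂ (o : Ordinal) (h : o < κ), ih o h)

/-- The transfinitely iterated free `π_n`-wild sets of `X`. -/
def iterFreeWild (n : ℕ) (X : Type*) [TopologicalSpace X] (κ : Ordinal) : Set X :=
  Ordinal.limitRecOn (motive := fun _ => Set X) κ Set.univ (fun _ ih => freeWildSub n ih)
    (fun κ _ ih => ⋂ (o : Ordinal) (h : o < κ), ih o h)

/-- The `π_n`-wild rank of `X`: the least ordinal `κ` with `w_n^{κ+1}(X) = w_n^κ(X)`. -/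
def wrk (n : ℕ) (X : Type*) [TopologicalSpace X] : Ordinal :=
  sInf {κ | iterWild n X (κ + 1) = iterWild n X κ}

/-- The free `π_n`-wild rank of `X`. -/
def fwrk (n : ℕ) (X : Type*) [TopologicalSpace X] : Ordinal :=
  sInf {κ | iterFreeWild n X (κ + 1) = iterFreeWild n X κ}

section AuxWild

open ContinuousMap

universe u v w

variable {X : Type*} {Y : Type*} [TopologicalSpace X] [TopologicalSpace Y]

/-- The intermediate map at time `t` of a homotopy. -/
def htAt {f g : C(X, Y)} (H : f.Homotopy g) (t : unitInterval) : C(X, Y) :=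
  ⟨fun x => H (t, x), H.continuous.comp (continuous_const.prodMk continuous_id)⟩

lemma htAt_homotopic {f g : C(X, Y)} (H : f.Homotopy g) (t : unitInterval) :
    (htAt H t).Homotopic f := by
  refine ⟨ContinuousMap.Homotopy.symm
    { toFun := fun p => H (p.1 * t, p.2)
      continuous_toFun := by
        have hmul : Continuous (fun s : unitInterval => s * t) := by continuity
        exact H.continuous.comp ((hmul.comp continuous_fst).prodMk continuous_snd)
      map_zero_left := fun x => by
        show H (0 * t, x) = f x
        rw [zero_mul]; exact H.apply_zero x
      map_one_left := fun x => by
        show H (1 * t, x) = (htAt H t) x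
        rw [one_mul]; rfl }⟩

/-- A map with a left homotopy inverse sends wild points to wild points. -/
lemma isWildPoint_map {n : ℕ} {f : C(X, Y)} {g : C(Y, X)}
    (hgf : (g.comp f).Homotopic (ContinuousMap.id X))
    {x : X} (hx : IsWildPoint n x) : IsWildPoint n (f x) := by
  obtain ⟨F, hess, hbase, hconv⟩ := hx
  refine ⟨fun k => f.comp (F k), ?_, fun k => by simp [hbase k], ?_⟩
  · intro k y hy
    have h1 : (g.comp (f.comp (F k))).Homotopic (ContinuousMap.const _ (g y)) := by
      have := (ContinuousMap.Homotopic.refl g).comp hy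
      rwa [ContinuousMap.comp_const] at this
    have h2 : ((g.comp f).comp (F k)).Homotopic ((ContinuousMap.id X).comp (F k)) :=
      hgf.comp (ContinuousMap.Homotopic.refl (F k))
    rw [ContinuousMap.comp_assoc, ContinuousMap.id_comp] at h2
    exact hess k (g y) (h2.symm.trans h1)
  · intro U hU
    have hU' : f ⁻¹' U ∈ 𝓝 x := f.continuous.continuousAt.preimage_mem_nhds hU
    filter_upwards [hconv _ hU'] with k hk s using hk s

/-- Restrict a continuous map to subspaces. -/
def restrictCM (f : C(X, Y)) {S : Set X} {T : Set Y} (h : Set.MapsTo f S T) : C(↥S, ↥T) :=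
  ⟨fun p => ⟨f p.1, h p.2⟩,
    (f.continuous.comp continuous_subtype_val).subtype_mk _⟩

/-- Restrict a homotopy `g ∘ f ≃ id` to a subspace preserved by all of its stages. -/
def restrictHomotopy (f : C(X, Y)) (g : C(Y, X))
    (H : (g.comp f).Homotopy (ContinuousMap.id X))
    {S : Set X} {T : Set Y} (hf : Set.MapsTo f S T) (hg : Set.MapsTo g T S)
    (hS : ∀ t x, x ∈ S → H (t, x) ∈ S) :
    ((restrictCM g hg).comp (restrictCM f hf)).Homotopy (ContinuousMap.id ↥S) where
  toFun p := ⟨H (p.1, p.2.1), hS p.1 p.2.1 p.2.2⟩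
  continuous_toFun := (H.continuous.comp
    (continuous_fst.prodMk (continuous_subtype_val.comp continuous_snd))).subtype_mk _
  map_zero_left x := Subtype.ext (H.apply_zero x.1)
  map_one_left x := Subtype.ext (H.apply_one x.1)

lemma iterWild_zero (n : ℕ) (X : Type*) [TopologicalSpace X] :
    iterWild n X 0 = Set.univ := by
  unfold iterWild; exact Ordinal.limitRecOn_zero _ _ _

lemma iterWild_succ (n : ℕ) (X : Type*) [TopologicalSpace X] (κ : Ordinal) :
    iterWild n X (Order.succ κ) = wildSub n (iterWild n X κ) := by
  unfold iterWild; exact Ordinal.limitRecOn_succ _ _ _ _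

lemma iterWild_limit (n : ℕ) (X : Type*) [TopologicalSpace X] {κ : Ordinal}
    (hκ : Order.IsSuccLimit κ) :
    iterWild n X κ = ⋂ (o : Ordinal) (_ : o < κ), iterWild n X o := by
  unfold iterWild; exact Ordinal.limitRecOn_limit _ _ _ _ hκ

/-- `f` preserves the `κ`-th wild set, provided it is part of a homotopy equivalence. -/
def MapsWild (n : ℕ) (κ : Ordinal.{w}) : Prop :=
  ∀ (X : Type u) (Y : Type v) [TopologicalSpace X] [TopologicalSpace Y]
    (f : C(X, Y)) (g : C(Y, X)),
    (g.comp f).Homotopic (ContinuousMap.id X) → (f.comp g).Homotopic (ContinuousMap.id Y) →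
    Set.MapsTo f (iterWild n X κ) (iterWild n Y κ)

lemma mapsWild_zero (n : ℕ) : MapsWild.{u, v, w} n 0 := by
  intro X Y _ _ f g _ _ x _
  rw [iterWild_zero]; trivial

lemma key_succ (n : ℕ) (f : C(X, Y)) (g : C(Y, X))
    (H : (g.comp f).Homotopy (ContinuousMap.id X))
    {S : Set X} {T : Set Y} (hf : Set.MapsTo f S T) (hg : Set.MapsTo g T S)
    (hS : ∀ t x, x ∈ S → H (t, x) ∈ S) :
    Set.MapsTo f (wildSub n S) (wildSub n T) := by
  rintro x ⟨p, hp, rfl⟩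
  exact ⟨restrictCM f hf p,
    isWildPoint_map (f := restrictCM f hf) (g := restrictCM g hg)
      ⟨restrictHomotopy f g H hf hg hS⟩ hp, rfl⟩

lemma htAt_self_inv {f : C(X, Y)} {g : C(Y, X)}
    (H : (g.comp f).Homotopy (ContinuousMap.id X)) (t : unitInterval) :
    ((htAt H t).comp (htAt H t)).Homotopic (ContinuousMap.id X) := by
  have h1 : (htAt H t).Homotopic (ContinuousMap.id X) :=
    (htAt_homotopic H t).trans ⟨H⟩
  have h2 := h1.comp h1
  rwa [ContinuousMap.id_comp] at h2

lemma mapsWild_succ (n : ℕ) (κ : Ordinal.{w})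
    (ihuv : MapsWild.{u, v, w} n κ) (ihvu : MapsWild.{v, u, w} n κ)
    (ihuu : MapsWild.{u, u, w} n κ) :
    MapsWild.{u, v, w} n (Order.succ κ) := by
  intro X Y _ _ f g hgf hfg
  have hf := ihuv X Y f g hgf hfg
  have hg := ihvu Y X g f hfg hgf
  obtain ⟨H⟩ := hgf
  have hS : ∀ t x, x ∈ iterWild n X κ → H (t, x) ∈ iterWild n X κ := fun t x hx =>
    ihuu X X (htAt H t) (htAt H t) (htAt_self_inv H t) (htAt_self_inv H t) hx
  rw [iterWild_succ, iterWild_succ]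
  exact key_succ n f g H hf hg hS

lemma mapsWild_limit (n : ℕ) {κ : Ordinal.{w}} (hκ : Order.IsSuccLimit κ)
    (ih : ∀ o < κ, MapsWild.{u, v, w} n o) : MapsWild.{u, v, w} n κ := by
  intro X Y _ _ f g hgf hfg x hx
  rw [iterWild_limit n X hκ] at hx
  rw [iterWild_limit n Y hκ]
  simp only [Set.mem_iInter] at hx ⊢
  exact fun o ho => ih o ho X Y f g hgf hfg (hx o ho)

lemma mapsWild_all (n : ℕ) (κ : Ordinal.{w}) :
    MapsWild.{u, u, w} n κ ∧ MapsWild.{u, v, w} n κ ∧ MapsWild.{v, u, w} n κ ∧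
      MapsWild.{v, v, w} n κ := by
  induction κ using Ordinal.limitRecOn with
  | zero => exact ⟨mapsWild_zero n, mapsWild_zero n, mapsWild_zero n, mapsWild_zero n⟩
  | add_one κ ih =>
    rw [← Order.succ_eq_add_one]
    obtain ⟨ihuu, ihuv, ihvu, ihvv⟩ := ih
    exact ⟨mapsWild_succ n κ ihuu ihuu ihuu, mapsWild_succ n κ ihuv ihvu ihuu,
      mapsWild_succ n κ ihvu ihuv ihvv, mapsWild_succ n κ ihvv ihvv ihvv⟩
  | limit κ hκ ih =>
    exact ⟨mapsWild_limit n hκ (fun o ho => (ih o ho).1),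
      mapsWild_limit n hκ (fun o ho => (ih o ho).2.1),
      mapsWild_limit n hκ (fun o ho => (ih o ho).2.2.1),
      mapsWild_limit n hκ (fun o ho => (ih o ho).2.2.2)⟩

end AuxWild

/-- If `X` and `Y` are homotopy equivalent, then for every ordinal `κ` the
subspaces `w_n^κ(X)` and `w_n^κ(Y)` are homotopy equivalent. -/
theorem statement8 (n : ℕ) (X Y : Type*) [TopologicalSpace X] [TopologicalSpace Y]
    (h : Nonempty (ContinuousMap.HomotopyEquiv X Y)) (κ : Ordinal) :
    Nonempty (ContinuousMap.HomotopyEquiv ↥(iterWild n X κ) ↥(iterWild n Y κ)) := by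
  obtain ⟨e⟩ := h
  obtain ⟨Huu, Huv, Hvu, Hvv⟩ := mapsWild_all n κ
  have hf : Set.MapsTo e.toFun (iterWild n X κ) (iterWild n Y κ) :=
    Huv X Y e.toFun e.invFun e.left_inv e.right_inv
  have hg : Set.MapsTo e.invFun (iterWild n Y κ) (iterWild n X κ) :=
    Hvu Y X e.invFun e.toFun e.right_inv e.left_inv
  obtain ⟨H⟩ := e.left_inv
  obtain ⟨H'⟩ := e.right_inv
  have hS : ∀ t x, x ∈ iterWild n X κ → H (t, x) ∈ iterWild n X κ := fun t x hx =>
    Huu X X (htAt H t) (htAt H t) (htAt_self_inv H t) (htAt_self_inv H t) hx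
  have hT : ∀ t y, y ∈ iterWild n Y κ → H' (t, y) ∈ iterWild n Y κ := fun t y hy =>
    Hvv Y Y (htAt H' t) (htAt H' t) (htAt_self_inv H' t) (htAt_self_inv H' t) hy
  exact ⟨⟨restrictCM e.toFun hf, restrictCM e.invFun hg,
    ⟨restrictHomotopy e.toFun e.invFun H hf hg hS⟩,
    ⟨restrictHomotopy e.invFun e.toFun H' hg hf hT⟩⟩⟩
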